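/- arXiv:math/0411458 — 3 statements merged into one kernel-verified Lean document; each statement's English description precedes it below -/
import Mathlib

section
/- For distinct complex numbers x_1,...,x_k, let F(z)=∏_{i=1}^k(z-x_i) and for given y_1,...,y_k and a natural number n define the first-order differential operator D(z) = Σ_{i=1}^k [y_i F(z)/(F'(x_i)(z-x_i)x_i^n)] ∂/∂x_i and V(z) = Σ_{i=1}^k y_i F(z)/(F'(x_i)(z-x_i)x_i^n). Then for z_1 ≠ z_2 with z_1, z_2 distinct from all x_i: D(z_1)F(z_2) = (F(z_2)V(z_1) − V(z_2)F(z_1))/(z_1 − z_2). -/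
open Finset

lemma deriv_prod_update (k : ℕ) (x : Fin k → ℂ) (z : ℂ) (i : Fin k) :
    deriv (fun t => ∏ j, (z - Function.update x i t j)) (x i) =
      -∏ j ∈ Finset.univ.erase i, (z - x j) := by
  have hfun : (fun t => ∏ j, (z - Function.update x i t j)) =
      fun t => (z - t) * ∏ j ∈ Finset.univ.erase i, (z - x j) := by
    funext t
    rw [← Finset.mul_prod_erase Finset.univ _ (Finset.mem_univ i)]
    congr 1
    · simp
    · apply Finset.prod_congr rfl
      intro j hj
      rw [Function.update_of_ne (Finset.ne_of_mem_erase hj)]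
  rw [hfun]
  rw [deriv_mul_const]
  · rw [deriv_const_sub]; simp
  · exact (differentiable_const z).sub differentiable_id |>.differentiableAt

/-- Theorem 3(1) of the paper: `D(z₁)F(z₂) = (F(z₂)V(z₁) - V(z₂)F(z₁))/(z₁ - z₂)`,
where `D(z) = ∑ i, (y i · F(z)/(F'(x i)(z - x i) x i ^ n)) ∂/∂x i` and
`V(z) = ∑ i, y i · F(z)/(F'(x i)(z - x i) x i ^ n)`, `F(z) = ∏ i, (z - x i)`. -/
theorem D_apply_F (k n : ℕ) (x y : Fin k → ℂ) (hx : Function.Injective x)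
    (hx0 : ∀ i, x i ≠ 0) (z1 z2 : ℂ) (hz : z1 ≠ z2)
    (hz1 : ∀ i, z1 ≠ x i) (hz2 : ∀ i, z2 ≠ x i) :
    (∑ i, (y i * (∏ j, (z1 - x j)) /
        ((∏ j ∈ Finset.univ.erase i, (x i - x j)) * (z1 - x i) * x i ^ n)) *
      deriv (fun t => ∏ j, (z2 - Function.update x i t j)) (x i)) =
    ((∏ j, (z2 - x j)) *
        (∑ i, y i * (∏ j, (z1 - x j)) /
          ((∏ j ∈ Finset.univ.erase i, (x i - x j)) * (z1 - x i) * x i ^ n)) -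
      (∑ i, y i * (∏ j, (z2 - x j)) /
          ((∏ j ∈ Finset.univ.erase i, (x i - x j)) * (z2 - x i) * x i ^ n)) *
        (∏ j, (z1 - x j))) / (z1 - z2) := by
  have hzz : z1 - z2 ≠ 0 := sub_ne_zero.2 hz
  rw [eq_div_iff hzz, Finset.sum_mul, Finset.mul_sum, Finset.sum_mul,
    ← Finset.sum_sub_distrib]
  apply Finset.sum_congr rfl
  intro i _
  rw [deriv_prod_update]
  have hE : (∏ j ∈ Finset.univ.erase i, (x i - x j)) ≠ 0 := by
    apply Finset.prod_ne_zero_iff.2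
    intro j hj
    exact sub_ne_zero.2 fun h => (Finset.ne_of_mem_erase hj) (hx h).symm
  have h1 : z1 - x i ≠ 0 := sub_ne_zero.2 (hz1 i)
  have h2 : z2 - x i ≠ 0 := sub_ne_zero.2 (hz2 i)
  have hxn : x i ^ n ≠ 0 := pow_ne_zero n (hx0 i)
  rw [← Finset.mul_prod_erase Finset.univ (fun j => z2 - x j) (Finset.mem_univ i)]
  field_simp
  ring
end

section
/- Let K : Fin k → Fin k → ℂ be symmetric (K(i,j)=K(j,i)) and let x_1,...,x_k, z_1, z_2 be complex numbers with x_i pairwise distinct, z_1 ≠ z_2, and z_a ≠ x_i for all a, i. Then Σ_{i≠j} K(i,j)·[1/((z_1−x_i)(z_2−x_j))]·[1/(x_j−x_i) − 1/(z_2−x_i)] = (1/2)·Σ_{i≠j} [K(i,j)/(z_1−z_2)]·[1/((z_1−x_j)(z_1−x_i)) − 1/((z_2−x_i)(z_2−x_j))]. -/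
open Finset

lemma pointwise_sym (z1 z2 a b : ℂ) (hab : a ≠ b) (h1a : z1 ≠ a) (h1b : z1 ≠ b)
    (h2a : z2 ≠ a) (h2b : z2 ≠ b) (hz : z1 ≠ z2) :
    1 / ((z1 - a) * (z2 - b)) * (1 / (b - a) - 1 / (z2 - a)) +
      1 / ((z1 - b) * (z2 - a)) * (1 / (a - b) - 1 / (z2 - b)) =
    1 / (z1 - z2) * (1 / ((z1 - b) * (z1 - a)) - 1 / ((z2 - a) * (z2 - b))) := by
  have h1 : z1 - a ≠ 0 := sub_ne_zero.mpr h1a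
  have h2 : z1 - b ≠ 0 := sub_ne_zero.mpr h1b
  have h3 : z2 - a ≠ 0 := sub_ne_zero.mpr h2a
  have h4 : z2 - b ≠ 0 := sub_ne_zero.mpr h2b
  have h5 : b - a ≠ 0 := sub_ne_zero.mpr (Ne.symm hab)
  have h6 : a - b ≠ 0 := sub_ne_zero.mpr hab
  have h7 : z1 - z2 ≠ 0 := sub_ne_zero.mpr hz
  field_simp
  ring

/-- Lemma (3) of the paper: symmetrization identity for a symmetric kernel `K`. -/
theorem symmetric_double_sum (k : ℕ) (hk : 2 ≤ k) (K : Fin k → Fin k → ℂ)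
    (hK : ∀ i j, K i j = K j i) (x : Fin k → ℂ) (hx : Function.Injective x)
    (z1 z2 : ℂ) (hz : z1 ≠ z2) (hz1 : ∀ i, z1 ≠ x i) (hz2 : ∀ i, z2 ≠ x i) :
    (∑ i, ∑ j ∈ Finset.univ.erase i,
        K i j * (1 / ((z1 - x i) * (z2 - x j))) * (1 / (x j - x i) - 1 / (z2 - x i))) =
    (1 / 2) * ∑ i, ∑ j ∈ Finset.univ.erase i,
        K i j / (z1 - z2) *
          (1 / ((z1 - x j) * (z1 - x i)) - 1 / ((z2 - x i) * (z2 - x j))) := by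
  set F : Fin k → Fin k → ℂ := fun i j =>
    K i j * (1 / ((z1 - x i) * (z2 - x j))) * (1 / (x j - x i) - 1 / (z2 - x i)) with hF
  set G : Fin k → Fin k → ℂ := fun i j =>
    K i j / (z1 - z2) * (1 / ((z1 - x j) * (z1 - x i)) - 1 / ((z2 - x i) * (z2 - x j))) with hG
  have swap : (∑ i, ∑ j ∈ Finset.univ.erase i, F i j)
      = ∑ i, ∑ j ∈ Finset.univ.erase i, F j i := by
    rw [Finset.sum_comm' (fun x y =>
      ⟨fun ⟨_, hy⟩ => ⟨Finset.mem_erase.mpr ⟨(Finset.mem_erase.mp hy).1.symm, Finset.mem_univ _⟩,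
        Finset.mem_univ _⟩,
       fun ⟨hx', _⟩ => ⟨Finset.mem_univ _,
        Finset.mem_erase.mpr ⟨(Finset.mem_erase.mp hx').1.symm, Finset.mem_univ _⟩⟩⟩)]
  have key : ∀ i : Fin k, ∀ j ∈ Finset.univ.erase i, F i j + F j i = G i j := by
    intro i j hj
    have hij : j ≠ i := (Finset.mem_erase.mp hj).1
    have hxij : x i ≠ x j := fun h => hij (hx h).symm
    simp only [hF, hG]
    rw [hK j i]
    have := pointwise_sym z1 z2 (x i) (x j) hxij (hz1 i) (hz1 j) (hz2 i) (hz2 j) hz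
    calc K i j * (1 / ((z1 - x i) * (z2 - x j))) * (1 / (x j - x i) - 1 / (z2 - x i)) +
          K i j * (1 / ((z1 - x j) * (z2 - x i))) * (1 / (x i - x j) - 1 / (z2 - x j))
        = K i j * (1 / ((z1 - x i) * (z2 - x j)) * (1 / (x j - x i) - 1 / (z2 - x i)) +
            1 / ((z1 - x j) * (z2 - x i)) * (1 / (x i - x j) - 1 / (z2 - x j))) := by ring
      _ = K i j * (1 / (z1 - z2) *
            (1 / ((z1 - x j) * (z1 - x i)) - 1 / ((z2 - x i) * (z2 - x j)))) := by rw [this]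
      _ = K i j / (z1 - z2) *
            (1 / ((z1 - x j) * (z1 - x i)) - 1 / ((z2 - x i) * (z2 - x j))) := by ring
  have two : (∑ i, ∑ j ∈ Finset.univ.erase i, F i j) +
      (∑ i, ∑ j ∈ Finset.univ.erase i, F i j)
      = ∑ i, ∑ j ∈ Finset.univ.erase i, G i j := by
    nth_rewrite 2 [swap]
    rw [← Finset.sum_add_distrib]
    refine Finset.sum_congr rfl fun i _ => ?_
    rw [← Finset.sum_add_distrib]
    exact Finset.sum_congr rfl (key i)
  have := two
  linear_combination (1/2 : ℂ) * this
end

section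
/- Let K : Fin k → Fin k → ℂ be symmetric. For pairwise distinct x_1,...,x_k and z_1, z_2 distinct from all x_i, the antisymmetrized double sum Σ_{i≠j} K(i,j)·[ (1/((z_1−x_i)(z_2−x_j)))·(1/(x_j−x_i) − 1/(z_2−x_i)) − (1/((z_2−x_i)(z_1−x_j)))·(1/(x_j−x_i) − 1/(z_1−x_i)) ] vanishes. -/
open Finset

/-- The key cancellation proving `D(z₁)D(z₂) = D(z₂)D(z₁)`: the antisymmetrized
double sum vanishes for a symmetric kernel `K`. -/
theorem antisymmetrized_sum_vanishes (k : ℕ) (hk : 2 ≤ k) (K : Fin k → Fin k → ℂ)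
    (hK : ∀ i j, K i j = K j i) (x : Fin k → ℂ) (hx : Function.Injective x)
    (z1 z2 : ℂ) (hz1 : ∀ i, z1 ≠ x i) (hz2 : ∀ i, z2 ≠ x i) :
    (∑ i, ∑ j ∈ Finset.univ.erase i, K i j *
        ((1 / ((z1 - x i) * (z2 - x j))) * (1 / (x j - x i) - 1 / (z2 - x i)) -
         (1 / ((z2 - x i) * (z1 - x j))) * (1 / (x j - x i) - 1 / (z1 - x i)))) = 0 := by
  set F : Fin k → Fin k → ℂ := fun i j => K i j *
        ((1 / ((z1 - x i) * (z2 - x j))) * (1 / (x j - x i) - 1 / (z2 - x i)) -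
         (1 / ((z2 - x i) * (z1 - x j))) * (1 / (x j - x i) - 1 / (z1 - x i))) with hF
  have key : ∀ i j : Fin k, i ≠ j → F j i = - F i j := by
    intro i j hij
    have h1i : z1 - x i ≠ 0 := sub_ne_zero.mpr (hz1 i)
    have h1j : z1 - x j ≠ 0 := sub_ne_zero.mpr (hz1 j)
    have h2i : z2 - x i ≠ 0 := sub_ne_zero.mpr (hz2 i)
    have h2j : z2 - x j ≠ 0 := sub_ne_zero.mpr (hz2 j)
    have hji : x j - x i ≠ 0 := sub_ne_zero.mpr fun h => hij (hx h.symm)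
    have hij' : x i - x j ≠ 0 := sub_ne_zero.mpr fun h => hij (hx h)
    simp only [hF, hK j i]
    field_simp
    ring
  have hswap : (∑ i, ∑ j ∈ Finset.univ.erase i, F i j)
      = ∑ j, ∑ i ∈ Finset.univ.erase j, F i j := by
    refine Finset.sum_comm' fun i j => ?_
    simp [Finset.mem_erase, eq_comm, and_comm]
  have hneg : (∑ i, ∑ j ∈ Finset.univ.erase i, F i j)
      = - ∑ i, ∑ j ∈ Finset.univ.erase i, F i j := by
    conv_lhs => rw [hswap]
    rw [← Finset.sum_neg_distrib]
    refine Finset.sum_congr rfl fun j _ => ?_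
    rw [← Finset.sum_neg_distrib]
    refine Finset.sum_congr rfl fun i hi => ?_
    exact key j i (Finset.ne_of_mem_erase hi).symm
  linear_combination hneg / 2
end
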